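/- Let {μ_1, …, μ_p} and {r_1, …, r_p} be two orthonormal families in ℝ^N. Define r̃_1 = r_1 and, recursively for j = 2, …, p, r̃_j = U_{j−1} r_j, where U_j = U_{μ_j, r̃_j} ∘ ⋯ ∘ U_{μ_1, r̃_1} and U_{a,b} x = x − (⟨a − b, x⟩ / (1 − ⟨a, b⟩)) (a − b); assume that ⟨μ_j, r̃_j⟩ ≠ 1 at every step j = 1, …, p. Then the composite operator U_p = U_{μ_p, r̃_p} ∘ ⋯ ∘ U_{μ_1, r̃_1} satisfies U_p r_j = μ_j for every j = 1, …, p, and consequently its adjoint U_pᵀ satisfies U_pᵀ μ_j = r_j for every j = 1, …, p. -/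
import Mathlib


open scoped RealInnerProductSpace

/-- The operator `U_{a,b} x = x − (⟨a − b, x⟩ / (1 − ⟨a, b⟩)) (a − b)`. -/
noncomputable def Uop {E : Type*} [NormedAddCommGroup E] [InnerProductSpace ℝ E]
    (a b x : E) : E :=
  x - (⟪a - b, x⟫ / (1 - ⟪a, b⟫)) • (a - b)

/-- `K2aux μ r j = (U_j, r̃_j)` (0-indexed), where `r̃_0 = r_0`, `U_j = U_{μ_j, r̃_j} ∘ ⋯ ∘
U_{μ_0, r̃_0}`, and `r̃_{j+1} = U_j r_{j+1}`. -/
noncomputable def K2aux {E : Type*} [NormedAddCommGroup E] [InnerProductSpace ℝ E]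
    (μ r : ℕ → E) : ℕ → (E → E) × E
  | 0 => (Uop (μ 0) (r 0), r 0)
  | j + 1 =>
    let prev := K2aux μ r j
    let rt := prev.1 (r (j + 1))
    (Uop (μ (j + 1)) rt ∘ prev.1, rt)

section aux
variable {E : Type*} [NormedAddCommGroup E] [InnerProductSpace ℝ E]

lemma Uop_inner (a b : E) (ha : ⟪a, a⟫ = 1) (hb : ⟪b, b⟫ = 1) (hab : ⟪a, b⟫ ≠ 1)
    (x y : E) : ⟪Uop a b x, Uop a b y⟫ = ⟪x, y⟫ := by
  have h : (1 : ℝ) - ⟪a, b⟫ ≠ 0 := sub_ne_zero.mpr (Ne.symm hab)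
  have hba : ⟪b, a⟫ = ⟪a, b⟫ := real_inner_comm _ _
  simp only [Uop, inner_sub_left, inner_sub_right, real_inner_smul_left, real_inner_smul_right,
    ha, hb, hba]
  have hxa : ⟪x, a⟫ = ⟪a, x⟫ := real_inner_comm _ _
  have hxb : ⟪x, b⟫ = ⟪b, x⟫ := real_inner_comm _ _
  rw [hxa, hxb]
  field_simp
  ring

lemma Uop_apply_b (a b : E) (hb : ⟪b, b⟫ = 1) (hab : ⟪a, b⟫ ≠ 1) : Uop a b b = a := by
  have h : (1 : ℝ) - ⟪a, b⟫ ≠ 0 := sub_ne_zero.mpr (Ne.symm hab)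
  have hs : ⟪a - b, b⟫ = -(1 - ⟪a, b⟫) := by
    rw [inner_sub_left, hb]; ring
  rw [Uop, hs, neg_div, div_self h, neg_smul, one_smul, sub_neg_eq_add]
  abel

lemma Uop_fix (a b x : E) (hax : ⟪a, x⟫ = 0) (hbx : ⟪b, x⟫ = 0) : Uop a b x = x := by
  have : ⟪a - b, x⟫ = 0 := by rw [inner_sub_left, hax, hbx, sub_zero]
  simp [Uop, this]

end aux

/-- let `{μ_1, …, μ_p}` and `{r_1, …, r_p}` be orthonormal families in `ℝ^N`
(indexed here by `0, …, p−1`), with `⟨μ_j, r̃_j⟩ ≠ 1` at every step. Then the composite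
operator `U_p = U_{μ_p, r̃_p} ∘ ⋯ ∘ U_{μ_1, r̃_1}` satisfies `U_p r_j = μ_j` for every `j`,
and its adjoint `U_pᵀ` satisfies `U_pᵀ μ_j = r_j` for every `j` — the latter expressed via
the characterization `⟨μ_j, U_p y⟩ = ⟨U_pᵀ μ_j, y⟩` of the adjoint, i.e.
`⟨μ_j, U_p y⟩ = ⟨r_j, y⟩` for all `y`. -/
theorem K2_composite_maps_r_to_mu
    {N : ℕ} (p : ℕ) (hp : 1 ≤ p) (μ r : ℕ → EuclideanSpace ℝ (Fin N))
    (hμ : Orthonormal ℝ (fun i : Fin p => μ i.val))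
    (hr : Orthonormal ℝ (fun i : Fin p => r i.val))
    (hstep : ∀ j < p, ⟪μ j, (K2aux μ r j).2⟫ ≠ 1) :
    (∀ j < p, (K2aux μ r (p - 1)).1 (r j) = μ j) ∧
      ∀ j < p, ∀ y : EuclideanSpace ℝ (Fin N),
        ⟪μ j, (K2aux μ r (p - 1)).1 y⟫ = ⟪r j, y⟫ := by
  have hμ1 : ∀ j < p, ⟪μ j, μ j⟫ = 1 := by
    intro j hj
    rw [real_inner_self_eq_norm_sq]
    have := hμ.1 ⟨j, hj⟩
    simp only at this
    rw [this]; norm_num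
  have hr1 : ∀ j < p, ⟪r j, r j⟫ = 1 := by
    intro j hj
    rw [real_inner_self_eq_norm_sq]
    have := hr.1 ⟨j, hj⟩
    simp only at this
    rw [this]; norm_num
  have hμ0 : ∀ i < p, ∀ j < p, i ≠ j → ⟪μ i, μ j⟫ = 0 := by
    intro i hi j hj hij
    exact hμ.2 (i := ⟨i, hi⟩) (j := ⟨j, hj⟩) (by simpa using hij)
  have hr0 : ∀ i < p, ∀ j < p, i ≠ j → ⟪r i, r j⟫ = 0 := by
    intro i hi j hj hij
    exact hr.2 (i := ⟨i, hi⟩) (j := ⟨j, hj⟩) (by simpa using hij)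
  have key : ∀ j, j < p →
      (∀ x y : EuclideanSpace ℝ (Fin N),
        ⟪(K2aux μ r j).1 x, (K2aux μ r j).1 y⟫ = ⟪x, y⟫) ∧
      (∀ i ≤ j, (K2aux μ r j).1 (r i) = μ i) := by
    intro j
    induction j with
    | zero =>
      intro hj
      have hs := hstep 0 hj
      have hs' : ⟪μ 0, r 0⟫ ≠ 1 := hs
      constructor
      · intro x y
        exact Uop_inner _ _ (hμ1 0 hj) (hr1 0 hj) hs' x y
      · intro i hi
        interval_cases i
        exact Uop_apply_b _ _ (hr1 0 hj) hs'
    | succ j ih =>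
      intro hj
      have hjp : j < p := Nat.lt_of_succ_lt hj
      obtain ⟨ihinner, ihmap⟩ := ih hjp
      have hs : ⟪μ (j + 1), (K2aux μ r j).1 (r (j + 1))⟫ ≠ 1 := hstep (j + 1) hj
      have hrt1 : ⟪(K2aux μ r j).1 (r (j + 1)), (K2aux μ r j).1 (r (j + 1))⟫ = 1 := by
        rw [ihinner]; exact hr1 (j + 1) hj
      constructor
      · intro x y
        show ⟪Uop (μ (j+1)) _ ((K2aux μ r j).1 x), Uop (μ (j+1)) _ ((K2aux μ r j).1 y)⟫ = _
        rw [Uop_inner _ _ (hμ1 (j+1) hj) hrt1 hs, ihinner]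
      · intro i hi
        rcases Nat.lt_or_ge i (j + 1) with hlt | hge
        · have hle : i ≤ j := Nat.lt_succ_iff.mp hlt
          show Uop (μ (j+1)) _ ((K2aux μ r j).1 (r i)) = μ i
          rw [ihmap i hle]
          apply Uop_fix
          · exact hμ0 (j+1) hj i (lt_of_le_of_lt hle hjp) (by omega)
          · rw [← ihmap i hle, ihinner]
            exact hr0 (j+1) hj i (lt_of_le_of_lt hle hjp) (by omega)
        · have : i = j + 1 := le_antisymm hi hge
          subst this
          show Uop (μ (j+1)) _ ((K2aux μ r j).1 (r (j+1))) = μ (j+1)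
          exact Uop_apply_b _ _ hrt1 hs
  have hppos : p - 1 < p := by omega
  obtain ⟨kinner, kmap⟩ := key (p - 1) hppos
  refine ⟨fun j hj => kmap j (by omega), fun j hj y => ?_⟩
  rw [← kmap j (by omega), kinner]
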